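/- Let K_e = {(x¹,x²,x³) ∈ ℝ³ : (x³)² = (x¹)²/a² + (x²)²/b², x³ > 0} with a > b > 0. Let l be an oriented line intersecting K_e at two distinct points p₁ and p₂, with unit direction v = (p₂ − p₁)/‖p₂ − p₁‖, and let m_{i,j}, I₁, I₂ be computed from any point of l and v. If I₁ = c₁ > 0 and I₂ = c₂ > 0, then the angle ∠p₁Op₂ at the origin O satisfies ∠p₁Op₂ > arcsin( 2ab√(c₁c₂) / (a²(b²+1)c₁ + (b²+1)c₂) ). -/

import Mathlib

open Real
open scoped RealInnerProductSpace

noncomputable section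

/-- The elliptic cone `(x³)² = (x¹)²/a² + (x²)²/b²`, `x³ > 0`. -/
def Ke (a b : ℝ) : Set (EuclideanSpace ℝ (Fin 3)) :=
  {x | (x 2) ^ 2 = (x 0) ^ 2 / a ^ 2 + (x 1) ^ 2 / b ^ 2 ∧ 0 < x 2}

def m12 (x v : EuclideanSpace ℝ (Fin 3)) : ℝ := x 0 * v 1 - x 1 * v 0
def m13 (x v : EuclideanSpace ℝ (Fin 3)) : ℝ := x 0 * v 2 - x 2 * v 0
def m23 (x v : EuclideanSpace ℝ (Fin 3)) : ℝ := x 1 * v 2 - x 2 * v 1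

def I1 (x v : EuclideanSpace ℝ (Fin 3)) : ℝ := m12 x v ^ 2 + m13 x v ^ 2 + m23 x v ^ 2

def I2 (a b : ℝ) (x v : EuclideanSpace ℝ (Fin 3)) : ℝ :=
  a ^ 2 * m23 x v ^ 2 + b ^ 2 * m13 x v ^ 2 - m12 x v ^ 2

/-!
Write a point of the cone as `x = x₃ (a α, b β, 1)` with `α² + β² = 1`. Computed from `p₂` and
the unit direction, `I₁` and `I₂` are `‖p₂ - p₁‖⁻²` times `I₁ p₁ p₂` and `I₂ p₁ p₂`, and the bound
is homogeneous, so everything reduces to the pair `x = p₁`, `y = p₂`. There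
`sin ∠xOy · ‖x‖ ‖y‖ = √(I₁ x y)` (Lagrange's identity) and `√(I₂ x y) = a b x₃ y₃ u` with
`u = 1 - α₁α₂ - β₁β₂`. After AM–GM, `2 x₃ y₃ ‖x‖ ‖y‖ ≤ y₃² ‖x‖² + x₃² ‖y‖²`, the claim becomes a
polynomial inequality in `α, β`, which holds because the gap is a sum of squares plus `a² - b²`
times a nonnegative term.
-/

open InnerProductGeometry

section Coordinates

variable (x y : EuclideanSpace ℝ (Fin 3))

lemma inner_eq_coords : ⟪x, y⟫ = x 0 * y 0 + x 1 * y 1 + x 2 * y 2 := by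
  simp [PiLp.inner_apply, Fin.sum_univ_three]
  ring

lemma norm_sq_eq_coords : ‖x‖ ^ 2 = x 0 ^ 2 + x 1 ^ 2 + x 2 ^ 2 := by
  rw [← real_inner_self_eq_norm_sq, inner_eq_coords]
  ring

lemma I1_eq_inner : I1 x y = ⟪x, x⟫ * ⟪y, y⟫ - ⟪x, y⟫ * ⟪x, y⟫ := by
  simp only [I1, m12, m13, m23, inner_eq_coords]
  ring

lemma sin_angle_mul_norm_mul_norm_eq_sqrt_I1 :
    sin (angle x y) * (‖x‖ * ‖y‖) = √(I1 x y) := by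
  rw [sin_angle_mul_norm_mul_norm, I1_eq_inner]

lemma I1_smul_right (c : ℝ) : I1 x (c • y) = c ^ 2 * I1 x y := by
  simp only [I1, m12, m13, m23, PiLp.smul_apply, smul_eq_mul]
  ring

lemma I2_smul_right (a b c : ℝ) : I2 a b x (c • y) = c ^ 2 * I2 a b x y := by
  simp only [I2, m12, m13, m23, PiLp.smul_apply, smul_eq_mul]
  ring

lemma I1_sub_self_right : I1 y (y - x) = I1 x y := by
  simp only [I1, m12, m13, m23, PiLp.sub_apply]
  ring

lemma I2_sub_self_right (a b : ℝ) : I2 a b y (y - x) = I2 a b x y := by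
  simp only [I2, m12, m13, m23, PiLp.sub_apply]
  ring

end Coordinates

lemma arcsin_lt_of_lt_sin {x θ : ℝ} (h₀ : 0 ≤ θ) (h : x < sin θ) : arcsin x < θ := by
  rcases le_or_gt θ (π / 2) with hθ | hθ
  · exact (arcsin_lt_iff_lt_sin' ⟨by linarith [pi_pos], hθ⟩).2 h
  · exact (arcsin_le_pi_div_two x).trans_lt hθ

lemma exists_sq_add_sq_eq_one_of_mem_Ke {a b : ℝ} (ha : a ≠ 0) (hb : b ≠ 0)
    {x : EuclideanSpace ℝ (Fin 3)} (hx : x ∈ Ke a b) :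
    ∃ α β : ℝ, α ^ 2 + β ^ 2 = 1 ∧ x 0 = a * α * x 2 ∧ x 1 = b * β * x 2 := by
  obtain ⟨hcone, hx₂⟩ := hx
  refine ⟨x 0 / (a * x 2), x 1 / (b * x 2), ?_, by field_simp, by field_simp⟩
  field_simp
  field_simp at hcone
  linear_combination -hcone

/-- For `Pᵢ = (a αᵢ, b βᵢ, 1)` with `αᵢ² + βᵢ² = 1` and `u = 1 - α₁α₂ - β₁β₂`, this reads
`b² u (‖P₁‖² + ‖P₂‖²) < (b² + 1) (‖P₁ × P₂‖² + b² u²)`. -/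
lemma unit_circle_ineq {a b α₁ β₁ α₂ β₂ : ℝ} (hab : b ≤ a) (hb : 0 < b)
    (h₁ : α₁ ^ 2 + β₁ ^ 2 = 1) (h₂ : α₂ ^ 2 + β₂ ^ 2 = 1) (hu : 0 < 1 - (α₁ * α₂ + β₁ * β₂)) :
    b ^ 2 * (1 - (α₁ * α₂ + β₁ * β₂)) * (2 + a ^ 2 * (α₁ ^ 2 + α₂ ^ 2) + b ^ 2 * (β₁ ^ 2 + β₂ ^ 2))
      < (b ^ 2 + 1) * (a ^ 2 * (α₁ - α₂) ^ 2 + b ^ 2 * (β₁ - β₂) ^ 2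
        + a ^ 2 * b ^ 2 * (α₁ * β₂ - α₂ * β₁) ^ 2 + b ^ 2 * (1 - (α₁ * α₂ + β₁ * β₂)) ^ 2) := by
  set u := 1 - (α₁ * α₂ + β₁ * β₂)
  set w := α₁ * β₂ - α₂ * β₁
  have hu₂ : u ≤ 2 := by nlinarith [sq_nonneg (α₁ + α₂), sq_nonneg (β₁ + β₂)]
  have hab₂ : 0 ≤ a ^ 2 - b ^ 2 := by nlinarith
  have hgap : 2 * ((b ^ 2 + 1) * (a ^ 2 * (α₁ - α₂) ^ 2 + b ^ 2 * (β₁ - β₂) ^ 2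
        + a ^ 2 * b ^ 2 * w ^ 2 + b ^ 2 * u ^ 2)
      - b ^ 2 * u * (2 + a ^ 2 * (α₁ ^ 2 + α₂ ^ 2) + b ^ 2 * (β₁ ^ 2 + β₂ ^ 2)))
      = (a ^ 2 - b ^ 2) * ((α₁ - α₂) ^ 2 * (2 * (b ^ 2 + 1) - b ^ 2 * u)
          + 2 * b ^ 4 * w ^ 2 + b ^ 2 * u * (β₁ + β₂) ^ 2)
        + 2 * (b ^ 2 + 1) * b ^ 2 * (b ^ 2 * w ^ 2 + u ^ 2) := by
    linear_combination (2*b^2 + b^4 - 2*b^4*β₂^2 - 2*b^4*α₂^2 + b^4*β₁*β₂ + b^4*α₁*α₂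
        - a^2*b^2 + 2*a^2*b^2*β₂^2 + 2*a^2*b^2*α₂^2 + a^2*b^2*β₁*β₂ + a^2*b^2*α₁*α₂) * h₁
      + (2*b^2 - b^4 + b^4*β₁*β₂ + b^4*α₁*α₂ + a^2*b^2 + a^2*b^2*β₁*β₂ + a^2*b^2*α₁*α₂) * h₂
  have hnonneg : 0 ≤ (a ^ 2 - b ^ 2) * ((α₁ - α₂) ^ 2 * (2 * (b ^ 2 + 1) - b ^ 2 * u)
      + 2 * b ^ 4 * w ^ 2 + b ^ 2 * u * (β₁ + β₂) ^ 2) := by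
    have : 0 ≤ 2 * (b ^ 2 + 1) - b ^ 2 * u := by nlinarith
    positivity
  have hpos : 0 < 2 * (b ^ 2 + 1) * b ^ 2 * (b ^ 2 * w ^ 2 + u ^ 2) := by positivity
  linarith

lemma two_mul_sqrt_I2_mul_norm_mul_norm_lt {a b : ℝ} (hab : b ≤ a) (hb : 0 < b)
    {x y : EuclideanSpace ℝ (Fin 3)} (hx : x ∈ Ke a b) (hy : y ∈ Ke a b) (hI2 : 0 < I2 a b x y) :
    2 * a * b * √(I2 a b x y) * (‖x‖ * ‖y‖) < (b ^ 2 + 1) * (a ^ 2 * I1 x y + I2 a b x y) := by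
  have ha : 0 < a := hb.trans_le hab
  obtain ⟨α₁, β₁, h₁, hx₀, hx₁⟩ := exists_sq_add_sq_eq_one_of_mem_Ke ha.ne' hb.ne' hx
  obtain ⟨α₂, β₂, h₂, hy₀, hy₁⟩ := exists_sq_add_sq_eq_one_of_mem_Ke ha.ne' hb.ne' hy
  have hs : 0 < x 2 := hx.2
  have ht : 0 < y 2 := hy.2
  set u := 1 - (α₁ * α₂ + β₁ * β₂)
  have hI2_eq : I2 a b x y = (a * b * (x 2 * y 2) * u) ^ 2 := by
    simp only [I2, m12, m13, m23]
    rw [hx₀, hx₁, hy₀, hy₁]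
    linear_combination a ^ 2 * b ^ 2 * x 2 ^ 2 * y 2 ^ 2 * (1 - α₂ ^ 2 - β₂ ^ 2) * h₁
  have hI12_eq : a ^ 2 * I1 x y + I2 a b x y = a ^ 2 * (x 2 * y 2) ^ 2 *
      (a ^ 2 * (α₁ - α₂) ^ 2 + b ^ 2 * (β₁ - β₂) ^ 2 + a ^ 2 * b ^ 2 * (α₁ * β₂ - α₂ * β₁) ^ 2
        + b ^ 2 * u ^ 2) := by
    rw [hI2_eq]
    simp only [I1, m12, m13, m23]
    rw [hx₀, hx₁, hy₀, hy₁]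
    ring
  have hu : 0 < u := by
    have : 0 ≤ u := by nlinarith [sq_nonneg (α₁ - α₂), sq_nonneg (β₁ - β₂)]
    refine this.lt_of_ne fun h ↦ ?_
    rw [hI2_eq, ← h] at hI2
    simp at hI2
  have hsqrt : √(I2 a b x y) = a * b * (x 2 * y 2) * u := by
    rw [hI2_eq, sqrt_sq (by positivity)]
  have hamgm : 2 * (x 2 * y 2) * (‖x‖ * ‖y‖) ≤
      (x 2 * y 2) ^ 2 * (2 + a ^ 2 * (α₁ ^ 2 + α₂ ^ 2) + b ^ 2 * (β₁ ^ 2 + β₂ ^ 2)) := by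
    have := two_mul_le_add_sq (y 2 * ‖x‖) (x 2 * ‖y‖)
    rw [mul_pow, mul_pow, norm_sq_eq_coords, norm_sq_eq_coords, hx₀, hx₁, hy₀, hy₁] at this
    linear_combination this
  have key := unit_circle_ineq hab hb h₁ h₂ hu
  calc 2 * a * b * √(I2 a b x y) * (‖x‖ * ‖y‖)
      = a ^ 2 * b ^ 2 * u * (2 * (x 2 * y 2) * (‖x‖ * ‖y‖)) := by rw [hsqrt]; ring
    _ ≤ a ^ 2 * (x 2 * y 2) ^ 2 *
        (b ^ 2 * u * (2 + a ^ 2 * (α₁ ^ 2 + α₂ ^ 2) + b ^ 2 * (β₁ ^ 2 + β₂ ^ 2))) := by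
      linarith [mul_le_mul_of_nonneg_left hamgm (by positivity : 0 ≤ a ^ 2 * b ^ 2 * u)]
    _ < _ := by
      rw [hI12_eq, mul_left_comm (b ^ 2 + 1)]
      exact mul_lt_mul_of_pos_left key (by positivity)

def angleBound (a b c₁ c₂ : ℝ) : ℝ :=
  2 * a * b * √(c₁ * c₂) / (a ^ 2 * (b ^ 2 + 1) * c₁ + (b ^ 2 + 1) * c₂)

lemma angleBound_mul_mul (a b c₁ c₂ : ℝ) {t : ℝ} (ht : 0 < t) :
    angleBound a b (t * c₁) (t * c₂) = angleBound a b c₁ c₂ := by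
  have hsqrt : √(t * c₁ * (t * c₂)) = t * √(c₁ * c₂) := by
    rw [show t * c₁ * (t * c₂) = t ^ 2 * (c₁ * c₂) by ring, sqrt_mul (sq_nonneg t), sqrt_sq ht.le]
  rw [angleBound, angleBound, hsqrt, mul_left_comm (2 * a * b),
    show a ^ 2 * (b ^ 2 + 1) * (t * c₁) + (b ^ 2 + 1) * (t * c₂)
      = t * (a ^ 2 * (b ^ 2 + 1) * c₁ + (b ^ 2 + 1) * c₂) by ring,
    mul_div_mul_left _ _ ht.ne']

lemma ne_zero_of_mem_Ke {a b : ℝ} {x : EuclideanSpace ℝ (Fin 3)} (hx : x ∈ Ke a b) : x ≠ 0 := by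
  rintro rfl
  simpa using hx.2

lemma angleBound_lt_sin_angle {a b : ℝ} (hab : b ≤ a) (hb : 0 < b)
    {x y : EuclideanSpace ℝ (Fin 3)} (hx : x ∈ Ke a b) (hy : y ∈ Ke a b)
    (hI1 : 0 < I1 x y) (hI2 : 0 < I2 a b x y) :
    angleBound a b (I1 x y) (I2 a b x y) < sin (angle x y) := by
  have hN : 0 < ‖x‖ * ‖y‖ := by
    have := ne_zero_of_mem_Ke hx
    have := ne_zero_of_mem_Ke hy
    positivity
  have hD : 0 < (b ^ 2 + 1) * (a ^ 2 * I1 x y + I2 a b x y) := by positivity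
  have hsin : sin (angle x y) = √(I1 x y) / (‖x‖ * ‖y‖) :=
    eq_div_of_mul_eq hN.ne' (sin_angle_mul_norm_mul_norm_eq_sqrt_I1 x y)
  have hbound : angleBound a b (I1 x y) (I2 a b x y) =
      √(I1 x y) * (2 * a * b * √(I2 a b x y)) / ((b ^ 2 + 1) * (a ^ 2 * I1 x y + I2 a b x y)) := by
    rw [angleBound, sqrt_mul hI1.le]
    ring
  rw [hsin, hbound, div_lt_div_iff₀ hD hN]
  calc √(I1 x y) * (2 * a * b * √(I2 a b x y)) * (‖x‖ * ‖y‖)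
      = √(I1 x y) * (2 * a * b * √(I2 a b x y) * (‖x‖ * ‖y‖)) := by ring
    _ < √(I1 x y) * ((b ^ 2 + 1) * (a ^ 2 * I1 x y + I2 a b x y)) :=
      mul_lt_mul_of_pos_left (two_mul_sqrt_I2_mul_norm_mul_norm_lt hab hb hx hy hI2)
        (sqrt_pos.2 hI1)

theorem stmt_1_general (a b c₁ c₂ : ℝ) (hab : b < a) (hb : 0 < b) (hc₁ : 0 < c₁) (hc₂ : 0 < c₂)
    (p₁ p₂ : EuclideanSpace ℝ (Fin 3)) (h₁ : p₁ ∈ Ke a b) (h₂ : p₂ ∈ Ke a b)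
    (v : EuclideanSpace ℝ (Fin 3)) (hv : v = ‖p₂ - p₁‖⁻¹ • (p₂ - p₁))
    (hI1 : I1 p₂ v = c₁) (hI2 : I2 a b p₂ v = c₂) :
    Real.arcsin (2 * a * b * Real.sqrt (c₁ * c₂) /
        (a ^ 2 * (b ^ 2 + 1) * c₁ + (b ^ 2 + 1) * c₂)) <
      InnerProductGeometry.angle p₁ p₂ := by
  rw [hv, I1_smul_right, I1_sub_self_right] at hI1
  rw [hv, I2_smul_right, I2_sub_self_right] at hI2
  have ht₀ : 0 ≤ ‖p₂ - p₁‖⁻¹ ^ 2 := sq_nonneg _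
  generalize ‖p₂ - p₁‖⁻¹ ^ 2 = t at hI1 hI2 ht₀
  subst hI1 hI2
  have hC₁ : 0 < I1 p₁ p₂ := pos_of_mul_pos_right hc₁ ht₀
  have ht : 0 < t := pos_of_mul_pos_left hc₁ hC₁.le
  have hC₂ : 0 < I2 a b p₁ p₂ := pos_of_mul_pos_right hc₂ ht.le
  show arcsin (angleBound a b _ _) < _
  rw [angleBound_mul_mul _ _ _ _ ht]
  exact arcsin_lt_of_lt_sin (angle_nonneg _ _) (angleBound_lt_sin_angle hab.le hb h₁ h₂ hC₁ hC₂)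

/-- If an oriented line meets the elliptic cone at `p₁` and `p₂` and the first integrals have
values `c₁ > 0`, `c₂ > 0`, then the angle `∠ p₁ O p₂` is greater than
`arcsin (2ab√(c₁c₂) / (a²(b²+1)c₁ + (b²+1)c₂))`. -/
theorem stmt_1 (a b c₁ c₂ : ℝ) (hab : b < a) (hb : 0 < b) (hc₁ : 0 < c₁) (hc₂ : 0 < c₂)
    (p₁ p₂ : EuclideanSpace ℝ (Fin 3)) (h₁ : p₁ ∈ Ke a b) (h₂ : p₂ ∈ Ke a b) (hne : p₁ ≠ p₂)
    (v : EuclideanSpace ℝ (Fin 3)) (hv : v = ‖p₂ - p₁‖⁻¹ • (p₂ - p₁))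
    (hI1 : I1 p₂ v = c₁) (hI2 : I2 a b p₂ v = c₂) :
    Real.arcsin (2 * a * b * Real.sqrt (c₁ * c₂) /
        (a ^ 2 * (b ^ 2 + 1) * c₁ + (b ^ 2 + 1) * c₂)) <
      InnerProductGeometry.angle p₁ p₂ :=
  stmt_1_general a b c₁ c₂ hab hb hc₁ hc₂ p₁ p₂ h₁ h₂ v hv hI1 hI2
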